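/- Every first-countable paratopological gyrogroup is ω-balanced. -/

import Mathlib

open Pointwise

/-- A gyrogroup: a groupoid with identity, inverses, gyroautomorphisms satisfying
the left gyroassociative law and the left loop property. -/
class Gyrogroup (G : Type*) extends Zero G, Neg G, Add G where
  zero_add : ∀ a : G, 0 + a = a
  add_zero : ∀ a : G, a + 0 = a
  neg_add_cancel : ∀ a : G, -a + a = 0
  add_neg_cancel : ∀ a : G, a + -a = 0
  gyr : G → G → G → G
  gyr_bijective : ∀ a b : G, Function.Bijective (gyr a b)
  gyr_add : ∀ a b x y : G, gyr a b (x + y) = gyr a b x + gyr a b y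
  gyrassoc : ∀ a b c : G, a + (b + c) = a + b + gyr a b c
  loop : ∀ a b : G, gyr (a + b) b = gyr a b

/-- A family γ of neighborhoods of 0 is subordinated to U if for all x, y there are
members V₁, V₂ of γ with ⊖(x⊕y)⊕((V₁⊕x)⊕y) ⊆ U and V₂ ⊆ ⊖(x⊕y)⊕((U⊕x)⊕y). -/
def Subordinated {G : Type*} [Add G] [Neg G] (γ : Set (Set G)) (U : Set G) : Prop :=
  (∀ x y : G, ∃ V ∈ γ, {-(x + y)} + ((V + {x}) + {y}) ⊆ U) ∧
  (∀ x y : G, ∃ V ∈ γ, V ⊆ {-(x + y)} + ((U + {x}) + {y}))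

/-- A paratopological gyrogroup is ω-balanced if every neighborhood of the identity
has a countable subordinated family of open neighborhoods of the identity. -/
def OmegaBalanced (G : Type*) [Add G] [Neg G] [Zero G] [TopologicalSpace G] : Prop :=
  ∀ U ∈ nhds (0 : G), ∃ γ : Set (Set G), γ.Countable ∧
    (∀ V ∈ γ, IsOpen V ∧ (0 : G) ∈ V) ∧ Subordinated γ U

/-! For all `x, y` the map `v ↦ ⊖(x ⊕ y) ⊕ ((v ⊕ x) ⊕ y)` is a homeomorphism fixing `0`:
left translations are inverted by left cancellation, right translations through the left Bol
identity. Hence a countable base of open neighbourhoods of `0` is subordinated to every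
neighbourhood of `0`. -/

namespace Gyrogroup

variable {G : Type*} [Gyrogroup G]

theorem neg_add_add_eq_gyr (a b : G) : -a + (a + b) = gyr (-a) a b := by
  rw [gyrassoc, neg_add_cancel, Gyrogroup.zero_add]

theorem add_left_cancel {a b c : G} (h : a + b = a + c) : b = c :=
  (gyr_bijective (-a) a).1 <| by rw [← neg_add_add_eq_gyr, ← neg_add_add_eq_gyr, h]

theorem gyr_zero_left (b c : G) : gyr 0 b c = c := by
  have h := gyrassoc (0 : G) b c
  rw [Gyrogroup.zero_add, Gyrogroup.zero_add] at h
  exact (add_left_cancel h).symm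

theorem gyr_apply_of_add_eq_zero {a b : G} (h : a + b = 0) (c : G) : gyr a b c = c := by
  rw [← loop, h, gyr_zero_left]

theorem neg_add_cancel_left (a b : G) : -a + (a + b) = b := by
  rw [neg_add_add_eq_gyr, gyr_apply_of_add_eq_zero (neg_add_cancel a)]

theorem add_neg_cancel_left (a b : G) : a + (-a + b) = b := by
  rw [gyrassoc, add_neg_cancel, Gyrogroup.zero_add,
    gyr_apply_of_add_eq_zero (add_neg_cancel a)]

theorem gyr_add_right_gyr (b c d : G) : gyr c (b + c) (gyr b c d) = d := by
  have hloop : gyr c (b + c) = gyr (-b) (b + c) := by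
    simpa only [neg_add_cancel_left] using loop (-b) (b + c)
  rw [hloop]
  refine add_left_cancel (a := c) ?_
  calc c + gyr (-b) (b + c) (gyr b c d) = -b + (b + c + gyr b c d) := by
        rw [gyrassoc (-b) (b + c), neg_add_cancel_left]
    _ = c + d := by rw [← gyrassoc, neg_add_cancel_left]

theorem left_bol (a z d : G) : a + (z + (a + d)) = (a + (z + a)) + d := by
  calc a + (z + (a + d)) = a + ((z + a) + gyr z a d) := by rw [← gyrassoc]
    _ = (a + (z + a)) + gyr a (z + a) (gyr z a d) := gyrassoc a (z + a) (gyr z a d)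
    _ = (a + (z + a)) + d := by rw [gyr_add_right_gyr]

-- By the left Bol identity `(x ⊕ (w ⊕ x)) ⊖ x = x ⊕ w`, this inverts `(· + x)`.
def subRight (x w : G) : G := -x + ((x + w) + -x)

theorem subRight_add_right (x w : G) : subRight x (w + x) = w := by
  have hbol : (x + (w + x)) + -x = x + w := by
    rw [← left_bol, add_neg_cancel, Gyrogroup.add_zero]
  rw [subRight, hbol, neg_add_cancel_left]

theorem add_right_injective (x : G) : Function.Injective (· + x) := fun _ _ h => by
  simpa only [subRight_add_right] using congrArg (subRight x) h

theorem subRight_injective (x : G) : Function.Injective (subRight x) := fun _ _ h =>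
  add_left_cancel (add_right_injective (-x) (add_left_cancel h))

theorem add_right_subRight (x w : G) : subRight x w + x = w :=
  subRight_injective x (subRight_add_right x (subRight x w))

section Topology

variable [TopologicalSpace G] [SeparatelyContinuousAdd G]

def addLeftHomeomorph (a : G) : G ≃ₜ G where
  toFun := (a + ·)
  invFun := (-a + ·)
  left_inv := neg_add_cancel_left a
  right_inv := add_neg_cancel_left a
  continuous_toFun := continuous_const_add a
  continuous_invFun := continuous_const_add (-a)

def addRightHomeomorph (x : G) : G ≃ₜ G where
  toFun := (· + x)
  invFun := subRight x
  left_inv := subRight_add_right x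
  right_inv := add_right_subRight x
  continuous_toFun := continuous_add_const x
  continuous_invFun :=
    continuous_const_add (-x) |>.comp <| (continuous_add_const (-x)).comp (continuous_const_add x)

-- In a group this is conjugation by `x + y`.
def conjHomeomorph (x y : G) : G ≃ₜ G :=
  (addRightHomeomorph x).trans ((addRightHomeomorph y).trans (addLeftHomeomorph (-(x + y))))

theorem conjHomeomorph_apply (x y v : G) : conjHomeomorph x y v = -(x + y) + ((v + x) + y) :=
  rfl

theorem conjHomeomorph_zero (x y : G) : conjHomeomorph x y 0 = 0 := by
  rw [conjHomeomorph_apply, Gyrogroup.zero_add, neg_add_cancel]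

theorem singleton_add_add_singleton_add_singleton (x y : G) (V : Set G) :
    {-(x + y)} + ((V + {x}) + {y}) = conjHomeomorph x y '' V := by
  simp only [Set.add_singleton, Set.singleton_add, Set.image_image]
  rfl

end Topology

end Gyrogroup

open Gyrogroup

/-- Every first-countable paratopological gyrogroup is ω-balanced. -/
theorem omegaBalanced_of_firstCountable {G : Type*} [Gyrogroup G] [TopologicalSpace G]
    [ContinuousAdd G] [FirstCountableTopology G] : OmegaBalanced G := by
  intro U hU
  obtain ⟨B, hBopen, hB⟩ := (nhds_basis_opens (0 : G)).exists_antitone_subbasis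
  refine ⟨Set.range B, Set.countable_range B,
    Set.forall_mem_range.2 fun n => (hBopen n).symm, fun x y => ?_, fun x y => ?_⟩
  · obtain ⟨n, hn⟩ := hB.mem_iff.1 <|
      (conjHomeomorph x y).continuous.tendsto' 0 0 (conjHomeomorph_zero x y) hU
    exact ⟨B n, ⟨n, rfl⟩, by
      rw [singleton_add_add_singleton_add_singleton]; exact Set.image_subset_iff.2 hn⟩
  · have himage : conjHomeomorph x y '' U ∈ nhds 0 := by
      simpa only [conjHomeomorph_zero] using (conjHomeomorph x y).isOpenMap.image_mem_nhds hU
    obtain ⟨n, hn⟩ := hB.mem_iff.1 himage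
    exact ⟨B n, ⟨n, rfl⟩, by rwa [singleton_add_add_singleton_add_singleton]⟩
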